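/- arXiv:2311.17625 — 4 statements merged into one kernel-verified Lean document; each statement's English description precedes it below -/
import Mathlib

section
/- Let ω : ℝ → ℝ be continuous with ω(0) = 0 and lim_{t→±∞} |ω(t)|/|t| = 0, and define θ_t ω(s) = ω(s+t) − ω(t) and z(θ_t ω) = -∫_{-∞}^0 e^s ω(s+t) ds + ω(t). Then lim_{t→±∞} |z(θ_t ω)|/|t| = 0. -/
open MeasureTheory Filter Set

private lemma exp_mul_int (c : ℝ) (hc : 0 < c) :
    IntegrableOn (fun s => Real.exp (c * s)) (Iic (0:ℝ)) ∧
      (∫ s in Iic (0:ℝ), Real.exp (c * s)) = 1 / c := by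
  have key : ∀ i : ℝ, (∫ x in i..(0:ℝ), Real.exp (c * x)) = c⁻¹ * (1 - Real.exp (c * i)) := by
    intro i
    rw [intervalIntegral.integral_comp_mul_left Real.exp (ne_of_gt hc)]
    simp [integral_exp]
  have hint : IntegrableOn (fun s => Real.exp (c * s)) (Iic (0:ℝ)) := by
    apply MeasureTheory.integrableOn_Iic_of_intervalIntegral_norm_bounded (1/c) 0
      (a := fun i : ℝ => i) (l := atBot)
    · intro i
      exact ((Real.continuous_exp.comp (continuous_const.mul continuous_id)).integrableOn_Ioc)
    · exact tendsto_id
    · filter_upwards with i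
      have h1 : (∫ x in i..(0:ℝ), ‖Real.exp (c * x)‖) = ∫ x in i..(0:ℝ), Real.exp (c * x) := by
        congr 1; ext x; exact Real.norm_of_nonneg (Real.exp_pos _).le
      rw [h1, key i]
      have := (Real.exp_pos (c * i)).le
      rw [one_div]
      nlinarith [inv_pos.mpr hc]
  refine ⟨hint, ?_⟩
  have := MeasureTheory.integral_Iic_of_hasDerivAt_of_tendsto'
    (f := fun x => Real.exp (c * x) / c) (f' := fun x => Real.exp (c * x)) (a := (0:ℝ)) (m := 0)
    ?_ hint ?_
  · rw [this]; simp [Real.exp_zero]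
  · intro x _
    have h2 : HasDerivAt (fun x => Real.exp (c * x)) (Real.exp (c * x) * c) x := by
      simpa [mul_comm, Function.comp_def] using (Real.hasDerivAt_exp (c*x)).comp x ((hasDerivAt_id x).const_mul c)
    simpa [mul_div_assoc, mul_div_cancel_right₀ _ (ne_of_gt hc)] using h2.div_const c
  · have h3 : Tendsto (fun x : ℝ => c * x) atBot atBot :=
      (tendsto_const_mul_atBot_of_pos hc).mpr tendsto_id
    simpa using ((Real.tendsto_exp_atBot.comp h3).div_const c)

private lemma lin_bound (ω : ℝ → ℝ) (hcont : Continuous ω)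
    (htop : Tendsto (fun t => |ω t| / |t|) atTop (nhds 0))
    (hbot : Tendsto (fun t => |ω t| / |t|) atBot (nhds 0)) :
    ∀ ε > 0, ∃ C > 0, ∀ u : ℝ, |ω u| ≤ ε * |u| + C := by
  intro ε hε
  obtain ⟨M, hM⟩ := (htop.eventually_lt_const hε).exists_forall_of_atTop
  obtain ⟨m, hm⟩ := (hbot.eventually_lt_const hε).exists_forall_of_atBot
  set a : ℝ := min m (-1)
  set b : ℝ := max M 1
  obtain ⟨C, hC⟩ := (isCompact_Icc (a := a) (b := b)).exists_bound_of_continuousOn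
    (hcont.continuousOn (s := Icc a b))
  refine ⟨|C| + 1, by positivity, fun u => ?_⟩
  rcases le_or_gt u b with hub | hub
  · rcases le_or_gt a u with hau | hau
    · have := hC u ⟨hau, hub⟩
      have h2 : |ω u| ≤ |C| := le_trans (by simpa [Real.norm_eq_abs] using this) (le_abs_self C)
      nlinarith [abs_nonneg u, abs_nonneg (ω u)]
    · have hu1 : u < -1 := lt_of_lt_of_le hau (min_le_right _ _)
      have hum : u ≤ m := le_of_lt (lt_of_lt_of_le hau (min_le_left _ _))
      have habs : |u| = -u := abs_of_neg (by linarith)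
      have := hm u hum
      have hupos : 0 < |u| := by rw [habs]; linarith
      rw [div_lt_iff₀ hupos] at this
      nlinarith [abs_nonneg C]
  · have hu1 : 1 < u := lt_of_le_of_lt (le_max_right _ _) hub
    have huM : M ≤ u := le_of_lt (lt_of_le_of_lt (le_max_left _ _) hub)
    have hupos : 0 < |u| := by rw [abs_of_pos (by linarith)]; linarith
    have := hM u huM
    rw [div_lt_iff₀ hupos] at this
    nlinarith [abs_nonneg C]

private lemma sublin_of_bound (f : ℝ → ℝ)
    (h : ∀ ε > 0, ∃ C > 0, ∀ t : ℝ, |f t| ≤ ε * |t| + C) :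
    Tendsto (fun t => |f t| / |t|) atTop (nhds 0) ∧
      Tendsto (fun t => |f t| / |t|) atBot (nhds 0) := by
  have key : ∀ ε > 0, ∃ N : ℝ, 1 ≤ N ∧ ∀ t : ℝ, N ≤ |t| → |f t| / |t| < ε := by
    intro ε hε
    obtain ⟨C, hC, hb⟩ := h (ε/2) (by positivity)
    refine ⟨max 1 (2*C/ε + 1), le_max_left _ _, fun t ht => ?_⟩
    have ht1 : (1:ℝ) ≤ |t| := le_trans (le_max_left _ _) ht
    have ht2 : 2*C/ε + 1 ≤ |t| := le_trans (le_max_right _ _) ht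
    have htpos : (0:ℝ) < |t| := by linarith
    have h1 : |f t| / |t| ≤ ε/2 + C/|t| := by
      rw [div_le_iff₀ htpos]
      calc |f t| ≤ ε/2 * |t| + C := hb t
        _ = (ε/2 + C/|t|) * |t| := by field_simp
    have h2 : C/|t| < ε/2 := by
      rw [div_lt_iff₀ htpos]
      have h3 : 2*C/ε < |t| := by linarith
      rw [div_lt_iff₀ hε] at h3
      linarith
    linarith
  constructor
  · rw [Metric.tendsto_atTop]
    intro ε hε
    obtain ⟨N, hN1, hN⟩ := key ε hε
    refine ⟨N, fun t ht => ?_⟩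
    have htpos : 0 < t := lt_of_lt_of_le (by linarith) ht
    have := hN t (by rw [abs_of_pos htpos]; exact ht)
    rw [Real.dist_eq, sub_zero, abs_of_nonneg (by positivity)]
    exact this
  · rw [Metric.tendsto_nhds]
    intro ε hε
    obtain ⟨N, hN1, hN⟩ := key ε hε
    filter_upwards [eventually_le_atBot (-N)] with t ht
    have htneg : t < 0 := lt_of_le_of_lt ht (by linarith)
    have := hN t (by rw [abs_of_neg htneg]; linarith)
    rw [Real.dist_eq, sub_zero, abs_of_nonneg (by positivity)]
    exact this

private lemma exp_abs_le (s : ℝ) (hs : s ≤ 0) :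
    Real.exp s * |s| ≤ Real.exp ((1/2 : ℝ) * s) := by
  have h2 : -s ≤ (1 - s/4)^2 := by nlinarith [sq_nonneg (1 + s/4)]
  have h3 : 1 - s/4 ≤ Real.exp (-s/4) := by
    have := Real.add_one_le_exp (-s/4); linarith
  have h4 : (1 - s/4)^2 ≤ Real.exp (-s/4)^2 := by
    apply pow_le_pow_left₀ (by linarith) h3
  have h5 : Real.exp (-s/4)^2 = Real.exp (-s/2) := by
    rw [sq, ← Real.exp_add]; ring_nf
  have h6 : -s ≤ Real.exp (-s/2) := by
    calc -s ≤ (1 - s/4)^2 := h2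
      _ ≤ Real.exp (-s/4)^2 := h4
      _ = Real.exp (-s/2) := h5
  have habs : |s| = -s := abs_of_nonpos hs
  rw [habs]
  calc Real.exp s * (-s) ≤ Real.exp s * Real.exp (-s/2) :=
        mul_le_mul_of_nonneg_left h6 (Real.exp_pos s).le
    _ = Real.exp ((1/2:ℝ) * s) := by rw [← Real.exp_add]; ring_nf

/-- The stationary Ornstein–Uhlenbeck process along the Wiener shift,
`z(θ_t ω) = -∫_{-∞}^0 e^s ω(s+t) ds + ω(t)`, has sublinear growth:
`|z(θ_t ω)|/|t| → 0` as `t → ±∞`. -/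
theorem ou_shift_sublinear_growth
    (ω : ℝ → ℝ) (hcont : Continuous ω) (h0 : ω 0 = 0)
    (htop : Tendsto (fun t => |ω t| / |t|) atTop (nhds 0))
    (hbot : Tendsto (fun t => |ω t| / |t|) atBot (nhds 0))
    (zθ : ℝ → ℝ)
    (hz : ∀ t : ℝ, zθ t = -(∫ s in Set.Iic (0:ℝ), Real.exp s * ω (s + t)) + ω t) :
    Tendsto (fun t => |zθ t| / |t|) atTop (nhds 0) ∧
      Tendsto (fun t => |zθ t| / |t|) atBot (nhds 0) := by
  apply sublin_of_bound
  intro ε hε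
  obtain ⟨C, hC, hb⟩ := lin_bound ω hcont htop hbot (ε/4) (by positivity)
  refine ⟨ε/2 + 2*C + 1, by positivity, fun t => ?_⟩
  obtain ⟨hint_half, hval_half⟩ := exp_mul_int (1/2) (by norm_num)
  obtain ⟨hint_one, hval_one⟩ := exp_mul_int 1 one_pos
  set g : ℝ → ℝ := fun s => (ε/4) * Real.exp ((1/2:ℝ) * s) + ((ε/4) * |t| + C) * Real.exp (1 * s)
    with hg_def
  have hg1 : IntegrableOn (fun s => (ε/4) * Real.exp ((1/2:ℝ) * s)) (Iic (0:ℝ)) :=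
    hint_half.const_mul _
  have hg2 : IntegrableOn (fun s => ((ε/4) * |t| + C) * Real.exp (1 * s)) (Iic (0:ℝ)) :=
    hint_one.const_mul _
  have hg_int : IntegrableOn g (Iic (0:ℝ)) := hg1.add hg2
  have hpt : ∀ s ∈ Iic (0:ℝ), ‖Real.exp s * ω (s + t)‖ ≤ g s := by
    intro s hs
    have hs0 : s ≤ 0 := hs
    have h1 : ‖Real.exp s * ω (s + t)‖ = Real.exp s * |ω (s + t)| := by
      rw [Real.norm_eq_abs, abs_mul, abs_of_pos (Real.exp_pos s)]
    rw [h1]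
    have h2 : |ω (s + t)| ≤ (ε/4) * |s + t| + C := hb (s + t)
    have h3 : |s + t| ≤ |s| + |t| := abs_add_le s t
    have h4 : Real.exp s * |s| ≤ Real.exp ((1/2:ℝ) * s) := exp_abs_le s hs0
    have h5 : (0:ℝ) < Real.exp s := Real.exp_pos s
    have h6 : Real.exp (1 * s) = Real.exp s := by rw [one_mul]
    simp only [hg_def, h6]
    have hq : (0:ℝ) ≤ ε/4 := by positivity
    calc Real.exp s * |ω (s+t)| ≤ Real.exp s * (ε/4 * |s+t| + C) :=
          mul_le_mul_of_nonneg_left h2 h5.le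
      _ ≤ Real.exp s * (ε/4 * (|s| + |t|) + C) := by
          apply mul_le_mul_of_nonneg_left _ h5.le
          nlinarith
      _ = ε/4 * (Real.exp s * |s|) + (ε/4 * |t| + C) * Real.exp s := by ring
      _ ≤ ε/4 * Real.exp ((1/2:ℝ)*s) + (ε/4 * |t| + C) * Real.exp s := by nlinarith
  have hae : ∀ᵐ s ∂(volume.restrict (Iic (0:ℝ))), ‖Real.exp s * ω (s + t)‖ ≤ g s :=
    (ae_restrict_iff' measurableSet_Iic).mpr (ae_of_all _ hpt)
  have hnorm : ‖∫ s in Iic (0:ℝ), Real.exp s * ω (s + t)‖ ≤ ∫ s in Iic (0:ℝ), g s :=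
    MeasureTheory.norm_integral_le_of_norm_le hg_int hae
  have hgval : (∫ s in Iic (0:ℝ), g s) = ε/2 + ((ε/4) * |t| + C) := by
    rw [hg_def]
    rw [MeasureTheory.integral_add hg1 hg2, MeasureTheory.integral_const_mul,
      MeasureTheory.integral_const_mul, hval_half, hval_one]
    norm_num
    ring
  have hωt : |ω t| ≤ (ε/4) * |t| + C := hb t
  have hzt : |zθ t| ≤ ‖∫ s in Iic (0:ℝ), Real.exp s * ω (s + t)‖ + |ω t| := by
    rw [hz t]
    calc |(-(∫ s in Iic (0:ℝ), Real.exp s * ω (s + t)) + ω t)|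
        ≤ |(-(∫ s in Iic (0:ℝ), Real.exp s * ω (s + t)))| + |ω t| := abs_add_le _ _
      _ = ‖∫ s in Iic (0:ℝ), Real.exp s * ω (s + t)‖ + |ω t| := by
          rw [abs_neg, Real.norm_eq_abs]
  calc |zθ t| ≤ ‖∫ s in Iic (0:ℝ), Real.exp s * ω (s + t)‖ + |ω t| := hzt
    _ ≤ (ε/2 + ((ε/4) * |t| + C)) + ((ε/4) * |t| + C) := by
        refine add_le_add (le_trans hnorm (le_of_eq hgval)) hωt
    _ ≤ ε * |t| + (ε/2 + 2*C + 1) := by nlinarith [abs_nonneg t]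
end

section
/- Let X be a Banach space, T(t) a C₀-semigroup on a closed subspace X₀ ⊆ X generated by A₀, and A a closed operator with part A₀ in X₀ and (ϑ,∞) ⊆ ρ(A). Define, for λ > ϑ, S(t)x = λ∫_0^t T(s)(λI−A)^{-1} x ds + (I − T(t))(λI−A)^{-1} x. Then S(0) = 0 and for x ∈ X₀ the map t ↦ S(t)x is continuously differentiable with derivative d/dt S(t)x = T(t)x. -/
/-!
Differentiating the defining formula gives `λ T(t) R x - T(t) A R x = T(t) (λ R x - A R x)`,
by the fundamental theorem of calculus for the integral term and differentiability of the
orbit of `R x ∈ D`; the resolvent identity turns this into `T(t) x` for `x ∈ X₀`.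
-/

open MeasureTheory Set

theorem hasDerivWithinAt_integral_Ici_of_continuousOn {E : Type*} [NormedAddCommGroup E]
    [NormedSpace ℝ E] [CompleteSpace E] {f : ℝ → E} {a t : ℝ}
    (hf : ContinuousOn f (Ici a)) (ht : t ∈ Ici a) :
    HasDerivWithinAt (fun u => ∫ s in a..u, f s) (f t) (Ici a) t := by
  have hmem : t ∈ Icc a (t + 1) := ⟨ht, by linarith⟩
  have : Fact (t ∈ Icc a (t + 1)) := ⟨hmem⟩
  have hfIcc : ContinuousOn f (Icc a (t + 1)) := hf.mono Icc_subset_Ici_self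
  have hfat : ContinuousOn f (uIcc a t) :=
    hf.mono (by rw [uIcc_of_le ht]; exact Icc_subset_Ici_self)
  refine (intervalIntegral.integral_hasDerivWithinAt_right (s := Icc a (t + 1))
    hfat.intervalIntegrable (hfIcc.stronglyMeasurableAtFilter_nhdsWithin measurableSet_Icc t)
    (hfIcc t hmem)).mono_of_mem_nhdsWithin ?_
  exact mem_nhdsWithin.2 ⟨Iio (t + 1), isOpen_Iio, lt_add_one t, fun y hy => ⟨hy.2, hy.1.le⟩⟩

theorem HasDerivWithinAt.smul_integral_add_const_sub {E : Type*} [NormedAddCommGroup E]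
    [NormedSpace ℝ E] [CompleteSpace E] {f : ℝ → E} {f' : E} {a t : ℝ}
    (hderiv : HasDerivWithinAt f f' (Ici a) t) (hf : ContinuousOn f (Ici a)) (ht : t ∈ Ici a)
    (c : ℝ) (y : E) :
    HasDerivWithinAt (fun u => c • (∫ s in a..u, f s) + (y - f u)) (c • f t - f') (Ici a) t := by
  rw [sub_eq_add_neg, ← zero_sub]
  exact ((hasDerivWithinAt_integral_Ici_of_continuousOn hf ht).const_smul c).add
    ((hasDerivWithinAt_const t _ y).sub hderiv)

theorem integrated_semigroup_formula_derivative_general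
    {X : Type*} [NormedAddCommGroup X] [NormedSpace ℝ X] [CompleteSpace X]
    (X₀ : Set X)
    (D : Set X) (A : X → X) (lam : ℝ)
    (T : ℝ → X →L[ℝ] X) (R : X →L[ℝ] X)
    -- T is a C₀-semigroup on X₀:
    (hT0 : ∀ x ∈ X₀, T 0 x = x)
    (hTcont : ∀ x ∈ X₀, ContinuousOn (fun t => T t x) (Ici (0:ℝ)))
    -- R maps X into the domain D(A₀) ⊆ X₀ of the part of A in X₀:
    (hRD : ∀ x : X, R x ∈ D) (hDX₀ : D ⊆ X₀)
    -- the semigroup is differentiable along the domain, with generator A₀ = A on D: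
    (hderiv : ∀ y ∈ D, ∀ t ∈ Ici (0:ℝ),
      HasDerivWithinAt (fun s => T s y) (T t (A y)) (Ici (0:ℝ)) t)
    -- resolvent identity (λI − A₀) R x = x on X₀:
    (hres : ∀ x ∈ X₀, lam • R x - A (R x) = x)
    -- the definition of S:
    (S : ℝ → X → X)
    (hS : ∀ t : ℝ, ∀ x : X,
      S t x = lam • (∫ s in (0:ℝ)..t, T s (R x)) + (R x - T t (R x))) :
    (∀ x : X, S 0 x = 0) ∧
      (∀ x ∈ X₀, ∀ t ∈ Ici (0:ℝ),
        HasDerivWithinAt (fun τ => S τ x) (T t x) (Ici (0:ℝ)) t) ∧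
      (∀ x ∈ X₀, ContinuousOn (fun t => T t x) (Ici (0:ℝ))) := by
  refine ⟨fun x => ?_, fun x hx t ht => ?_, hTcont⟩
  · rw [hS, intervalIntegral.integral_same, hT0 (R x) (hDX₀ (hRD x))]
    simp
  · have hSx := (hderiv (R x) (hRD x) t ht).smul_integral_add_const_sub
      (hTcont _ (hDX₀ (hRD x))) ht lam (R x)
    rw [← (T t).map_smul, ← (T t).map_sub, hres x hx] at hSx
    exact hSx.congr (fun τ _ => hS τ x) (hS t x)

/-- For a non-densely defined operator `A` whose part `A₀` in `X₀ = closure D(A)`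
generates a `C₀`-semigroup `T(t)`, with resolvent `R = (λI−A)^{-1}` for `λ > ϑ`,
the formula `S(t)x = λ∫_0^t T(s)Rx ds + (I − T(t))Rx` defines the integrated
semigroup: `S(0) = 0` and, for `x ∈ X₀`, `t ↦ S(t)x` is continuously
differentiable on `[0,∞)` with derivative `T(t)x`. -/
theorem integrated_semigroup_formula_derivative
    {X : Type*} [NormedAddCommGroup X] [NormedSpace ℝ X] [CompleteSpace X]
    (X₀ : Set X) (hX₀closed : IsClosed X₀)
    (D : Set X) (A : X → X) (lam : ℝ)
    (T : ℝ → X →L[ℝ] X) (R : X →L[ℝ] X)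
    -- T is a C₀-semigroup on X₀:
    (hT0 : ∀ x ∈ X₀, T 0 x = x)
    (hTsg : ∀ s t : ℝ, 0 ≤ s → 0 ≤ t → ∀ x ∈ X₀, T (s + t) x = T s (T t x))
    (hTX₀ : ∀ t : ℝ, 0 ≤ t → ∀ x ∈ X₀, T t x ∈ X₀)
    (hTcont : ∀ x ∈ X₀, ContinuousOn (fun t => T t x) (Ici (0:ℝ)))
    -- R maps X into the domain D(A₀) ⊆ X₀ of the part of A in X₀:
    (hRD : ∀ x : X, R x ∈ D) (hDX₀ : D ⊆ X₀)
    -- the semigroup is differentiable along the domain, with generator A₀ = A on D: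
    (hderiv : ∀ y ∈ D, ∀ t ∈ Ici (0:ℝ),
      HasDerivWithinAt (fun s => T s y) (T t (A y)) (Ici (0:ℝ)) t)
    -- resolvent identity (λI − A₀) R x = x on X₀:
    (hres : ∀ x ∈ X₀, lam • R x - A (R x) = x)
    -- R commutes with T on X₀:
    (hcomm : ∀ t : ℝ, 0 ≤ t → ∀ x ∈ X₀, R (T t x) = T t (R x))
    -- the definition of S:
    (S : ℝ → X → X)
    (hS : ∀ t : ℝ, ∀ x : X,
      S t x = lam • (∫ s in (0:ℝ)..t, T s (R x)) + (R x - T t (R x))) :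
    (∀ x : X, S 0 x = 0) ∧
      (∀ x ∈ X₀, ∀ t ∈ Ici (0:ℝ),
        HasDerivWithinAt (fun τ => S τ x) (T t x) (Ici (0:ℝ)) t) ∧
      (∀ x ∈ X₀, ContinuousOn (fun t => T t x) (Ici (0:ℝ))) :=
  integrated_semigroup_formula_derivative_general X₀ D A lam T R hT0 hTcont hRD hDX₀ hderiv hres S
    hS
end

section
/- Let γ ≥ 0, η ∈ (−∞, −γ), K, L > 0, and let ζ : ℝ → ℝ be continuous. For f in the weighted space C_η((−∞,0];X₀) with norm ‖f‖_η = sup_{t≤0} e^{−ηt−∫_0^t ζ} ‖f(t)‖, define (Tf)(t) = ∫_t^0 e^{γ(s−t)+∫_s^t ζ(r)dr} K L ‖f(s)‖ ds for t ≤ 0. Then sup_{t≤0} e^{−ηt−∫_0^t ζ}·(Tf)(t) ≤ (KL/(−(γ+η))) ‖f‖_η. -/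
open MeasureTheory Set

/-!
With the weight `w t = η t + ∫_0^t ζ`, the kernel factors as
`e^{γ(s-t) + ∫_s^t ζ} = e^{(γ+η)(s-t)} e^{w t - w s}`, so after multiplying by `e^{-w t}` the
integrand is at most `K L M e^{(γ+η)(s-t)}`, whose integral over `[t, 0]` is below
`K L M / (-(γ+η))` because `γ + η < 0`.
-/

theorem intervalIntegral_exp_mul_sub_le {c t b : ℝ} (hc : c < 0) :
    ∫ s in t..b, Real.exp (c * (s - t)) ≤ 1 / -c := by
  have hval : ∫ s in t..b, Real.exp (c * (s - t)) = (Real.exp (c * (b - t)) - 1) / c := by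
    rw [intervalIntegral.integral_comp_sub_right (fun u => Real.exp (c * u)),
      intervalIntegral.integral_comp_mul_left _ hc.ne, integral_exp, sub_self, mul_zero,
      Real.exp_zero, smul_eq_mul]
    field_simp
  rw [hval, div_neg, ← neg_div]
  exact div_le_div_of_nonpos_of_le hc.le (by linarith [Real.exp_pos (c * (b - t))])

theorem intervalIntegral_le_div_neg_of_le_mul_exp {g : ℝ → ℝ} {A c t b : ℝ} (hc : c < 0)
    (htb : t ≤ b) (hg_nonneg : ∀ s ∈ Icc t b, 0 ≤ g s)
    (hg_le : ∀ s ∈ Icc t b, g s ≤ A * Real.exp (c * (s - t))) :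
    ∫ s in t..b, g s ≤ A / -c := by
  have hA : 0 ≤ A := by
    simpa using (hg_nonneg t ⟨le_rfl, htb⟩).trans (hg_le t ⟨le_rfl, htb⟩)
  have hIoc : ∀ s ∈ Ioc t b, s ∈ Icc t b := fun s hs => Ioc_subset_Icc_self hs
  calc ∫ s in t..b, g s ≤ ∫ s in t..b, A * Real.exp (c * (s - t)) := by
        rw [intervalIntegral.integral_of_le htb, intervalIntegral.integral_of_le htb]
        refine integral_mono_of_nonneg ?_ ?_ ?_
        · exact ae_restrict_of_forall_mem measurableSet_Ioc fun s hs => hg_nonneg s (hIoc s hs)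
        · exact (by fun_prop : Continuous fun s => A * Real.exp (c * (s - t))).integrableOn_Ioc
        · exact ae_restrict_of_forall_mem measurableSet_Ioc fun s hs => hg_le s (hIoc s hs)
    _ = A * ∫ s in t..b, Real.exp (c * (s - t)) := intervalIntegral.integral_const_mul _ _
    _ ≤ A * (1 / -c) := by gcongr; exact intervalIntegral_exp_mul_sub_le hc
    _ = A / -c := by ring

theorem center_convolution_estimate_general
    {X₀ : Type*} [NormedAddCommGroup X₀]
    (γ η K L M : ℝ) (hη : η < -γ) (hK : 0 < K) (hL : 0 < L)
    (ζ : ℝ → ℝ) (hζ : Continuous ζ)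
    (f : ℝ → X₀)
    (hfb : ∀ t ≤ (0:ℝ), ‖f t‖ ≤ M * Real.exp (η * t + ∫ s in (0:ℝ)..t, ζ s)) :
    ∀ t ≤ (0:ℝ),
      Real.exp (-η * t - ∫ s in (0:ℝ)..t, ζ s) *
        (∫ s in t..(0:ℝ),
          Real.exp (γ * (s - t) + ∫ r in s..t, ζ r) * (K * L * ‖f s‖)) ≤
        K * L / (-(γ + η)) * M := by
  intro t ht
  set w : ℝ → ℝ := fun s => η * s + ∫ r in (0:ℝ)..s, ζ r
  have hkernel : ∀ s, γ * (s - t) + ∫ r in s..t, ζ r = (γ + η) * (s - t) + w t - w s := by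
    intro s
    rw [← intervalIntegral.integral_interval_sub_left (hζ.intervalIntegrable 0 t)
      (hζ.intervalIntegrable 0 s)]
    ring
  rw [show -η * t - ∫ s in (0:ℝ)..t, ζ s = -w t by ring, ← intervalIntegral.integral_const_mul]
  refine (intervalIntegral_le_div_neg_of_le_mul_exp (A := K * L * M) (c := γ + η)
    (by linarith) ht (fun s _ => by positivity) fun s hs => ?_).trans_eq (by ring)
  have hfs : Real.exp (-w s) * ‖f s‖ ≤ M := by
    rw [Real.exp_neg, inv_mul_le_iff₀ (Real.exp_pos _), mul_comm]
    exact hfb s hs.2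
  calc Real.exp (-w t) * (Real.exp (γ * (s - t) + ∫ r in s..t, ζ r) * (K * L * ‖f s‖))
      = K * L * Real.exp ((γ + η) * (s - t)) * (Real.exp (-w s) * ‖f s‖) := by
        rw [hkernel, sub_eq_add_neg, Real.exp_add, Real.exp_add, Real.exp_neg (w t)]
        field_simp
    _ ≤ K * L * Real.exp ((γ + η) * (s - t)) * M := by gcongr
    _ = K * L * M * Real.exp ((γ + η) * (s - t)) := by ring

/-- Center-part convolution estimate: for `γ ≥ 0`, `η < −γ`, if
`‖f(t)‖ ≤ M e^{ηt + ∫_0^t ζ}` for all `t ≤ 0`, then for all `t ≤ 0`,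
`e^{−ηt−∫_0^t ζ} ∫_t^0 e^{γ(s−t)+∫_s^t ζ} K L ‖f(s)‖ ds ≤ (KL/(−(γ+η))) M`. -/
theorem center_convolution_estimate
    {X₀ : Type*} [NormedAddCommGroup X₀] [NormedSpace ℝ X₀]
    (γ η K L M : ℝ) (hγ : 0 ≤ γ) (hη : η < -γ) (hK : 0 < K) (hL : 0 < L)
    (hM : 0 ≤ M)
    (ζ : ℝ → ℝ) (hζ : Continuous ζ)
    (f : ℝ → X₀) (hf : ContinuousOn f (Iic (0:ℝ)))
    (hfb : ∀ t ≤ (0:ℝ), ‖f t‖ ≤ M * Real.exp (η * t + ∫ s in (0:ℝ)..t, ζ s)) :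
    ∀ t ≤ (0:ℝ),
      Real.exp (-η * t - ∫ s in (0:ℝ)..t, ζ s) *
        (∫ s in t..(0:ℝ),
          Real.exp (γ * (s - t) + ∫ r in s..t, ζ r) * (K * L * ‖f s‖)) ≤
        K * L / (-(γ + η)) * M :=
  center_convolution_estimate_general γ η K L M hη hK hL ζ hζ f hfb
end

section
/- Let α > 0, η < α, K, L > 0, and ζ : ℝ → ℝ continuous. For f : [0,∞) → X₀ continuous with ‖f‖_η = sup_{t≥0} e^{−ηt−∫_0^t ζ} ‖f(t)‖ < ∞, define g(t) = ∫_t^{+∞} K e^{α(t−s)+∫_s^t ζ(r)dr} L ‖f(s)‖ ds. Then sup_{t≥0} e^{−ηt−∫_0^t ζ} g(t) ≤ (KL/(α−η)) ‖f‖_η. -/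
open MeasureTheory Set

lemma exp_neg_mul_integral_Ioi {b : ℝ} (hb : 0 < b) (t : ℝ) :
    ∫ s in Ioi t, Real.exp (-(b * s)) = Real.exp (-(b * t)) / b := by
  have := MeasureTheory.integral_comp_mul_left_Ioi (fun x => Real.exp (-x)) t hb
  simpa [integral_exp_neg_Ioi, integral_exp_Iic, smul_eq_mul, div_eq_inv_mul] using this

/-- Unstable-part convolution estimate: for `η < α`, if
`‖f(t)‖ ≤ M e^{ηt + ∫_0^t ζ}` for all `t ≥ 0`, then for all `t ≥ 0`,
`e^{−ηt−∫_0^t ζ} ∫_t^∞ K e^{α(t−s)+∫_s^t ζ} L ‖f(s)‖ ds ≤ (KL/(α−η)) M`. -/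
theorem unstable_convolution_estimate
    {X₀ : Type*} [NormedAddCommGroup X₀] [NormedSpace ℝ X₀]
    (α η K L M : ℝ) (hα : 0 < α) (hη : η < α) (hK : 0 < K) (hL : 0 < L)
    (hM : 0 ≤ M)
    (ζ : ℝ → ℝ) (hζ : Continuous ζ)
    (f : ℝ → X₀) (hf : ContinuousOn f (Ici (0:ℝ)))
    (hfb : ∀ t ≥ (0:ℝ), ‖f t‖ ≤ M * Real.exp (η * t + ∫ s in (0:ℝ)..t, ζ s)) :
    ∀ t ≥ (0:ℝ),
      Real.exp (-η * t - ∫ s in (0:ℝ)..t, ζ s) *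
        (∫ s in Set.Ici t,
          K * Real.exp (α * (t - s) + ∫ r in s..t, ζ r) * (L * ‖f s‖)) ≤
        K * L / (α - η) * M := by
  intro t ht
  set b := α - η with hb
  have hbpos : 0 < b := sub_pos.mpr hη
  set g : ℝ → ℝ := fun s => K * Real.exp (α * (t - s) + ∫ r in s..t, ζ r) * (L * ‖f s‖)
    with hg
  set C : ℝ := K * L * M * Real.exp (η * t + ∫ s in (0:ℝ)..t, ζ s) with hC
  have hCnonneg : 0 ≤ C := by positivity
  set h : ℝ → ℝ := fun s => C * Real.exp (-(b * (s - t))) with hh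
  -- pointwise bound g ≤ h on Ici t
  have hbound : ∀ s ∈ Ici t, g s ≤ h s := by
    intro s hs
    have hs0 : (0:ℝ) ≤ s := le_trans ht hs
    have hadd : (∫ r in (0:ℝ)..s, ζ r) + (∫ r in s..t, ζ r) = ∫ r in (0:ℝ)..t, ζ r :=
      intervalIntegral.integral_add_adjacent_intervals
        (hζ.intervalIntegrable _ _) (hζ.intervalIntegrable _ _)
    have h1 : g s ≤ K * Real.exp (α * (t - s) + ∫ r in s..t, ζ r)
        * (L * (M * Real.exp (η * s + ∫ r in (0:ℝ)..s, ζ r))) := by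
      have := hfb s hs0
      have hexp : (0:ℝ) < K * Real.exp (α * (t - s) + ∫ r in s..t, ζ r) := by positivity
      exact mul_le_mul_of_nonneg_left (mul_le_mul_of_nonneg_left this hL.le) hexp.le
    refine h1.trans_eq ?_
    have key : (α * (t - s) + ∫ r in s..t, ζ r) + (η * s + ∫ r in (0:ℝ)..s, ζ r)
        = (η * t + ∫ s in (0:ℝ)..t, ζ s) + -(b * (s - t)) := by
      rw [hb, ← hadd]; ring
    show K * Real.exp (α * (t - s) + ∫ r in s..t, ζ r)
        * (L * (M * Real.exp (η * s + ∫ r in (0:ℝ)..s, ζ r)))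
        = C * Real.exp (-(b * (s - t)))
    have rearr : ∀ x y : ℝ, K * x * (L * (M * y)) = K * L * M * (x * y) :=
      fun x y => by ring
    calc K * Real.exp (α * (t - s) + ∫ r in s..t, ζ r)
          * (L * (M * Real.exp (η * s + ∫ r in (0:ℝ)..s, ζ r)))
        = K * L * M * (Real.exp (α * (t - s) + ∫ r in s..t, ζ r)
            * Real.exp (η * s + ∫ r in (0:ℝ)..s, ζ r)) := rearr _ _
      _ = K * L * M * Real.exp ((α * (t - s) + ∫ r in s..t, ζ r)
            + (η * s + ∫ r in (0:ℝ)..s, ζ r)) := by rw [← Real.exp_add]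
      _ = C * Real.exp (-(b * (s - t))) := by rw [key, Real.exp_add, hC, ← mul_assoc]
  have hgnonneg : ∀ s ∈ Ici t, 0 ≤ g s := by
    intro s _
    have : (0:ℝ) ≤ K * Real.exp (α * (t - s) + ∫ r in s..t, ζ r) * (L * ‖f s‖) := by
      positivity
    exact this
  -- continuity of g on Ici t
  have hInt : Continuous fun s => ∫ r in s..t, ζ r := by
    have : Continuous fun s => - ∫ r in t..s, ζ r :=
      (intervalIntegral.continuous_primitive (fun a b => hζ.intervalIntegrable a b) t).neg
    simpa [intervalIntegral.integral_symm t] using this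
  have hgcont : ContinuousOn g (Ici t) := by
    have hfc : ContinuousOn f (Ici t) := hf.mono (Ici_subset_Ici.mpr ht)
    have h2 : Continuous fun s => K * Real.exp (α * (t - s) + ∫ r in s..t, ζ r) :=
      continuous_const.mul (((continuous_const.mul
        (continuous_const.sub continuous_id)).add hInt).rexp)
    exact h2.continuousOn.mul (continuousOn_const.mul hfc.norm)
  -- integrability of h on Ici t
  have hhint : IntegrableOn h (Ici t) := by
    have h0 : IntegrableOn (fun s => Real.exp (-b * s)) (Ioi t) :=
      exp_neg_integrableOn_Ioi t hbpos
    have h1 : IntegrableOn (fun s => C * Real.exp (b * t) * Real.exp (-b * s)) (Ioi t) :=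
      h0.const_mul _
    have h2 : IntegrableOn h (Ioi t) := by
      refine h1.congr_fun (fun s _ => ?_) measurableSet_Ioi
      show C * Real.exp (b * t) * Real.exp (-b * s) = C * Real.exp (-(b * (s - t)))
      rw [mul_assoc, ← Real.exp_add, show b * t + -b * s = -(b * (s - t)) by ring]
    rwa [IntegrableOn, MeasureTheory.Measure.restrict_congr_set MeasureTheory.Ioi_ae_eq_Ici] at h2
  -- integrability of g
  have hgint : IntegrableOn g (Ici t) := by
    refine Integrable.mono' hhint (hgcont.aestronglyMeasurable measurableSet_Ici) ?_
    filter_upwards [MeasureTheory.ae_restrict_mem measurableSet_Ici] with s hs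
    rw [Real.norm_of_nonneg (hgnonneg s hs)]
    exact hbound s hs
  -- comparison of integrals
  have hIle : (∫ s in Ici t, g s) ≤ ∫ s in Ici t, h s :=
    setIntegral_mono_on hgint hhint measurableSet_Ici hbound
  -- compute integral of h
  have hIh : (∫ s in Ici t, h s) = C / b := by
    rw [MeasureTheory.integral_Ici_eq_integral_Ioi]
    have e : ∀ s : ℝ, h s = C * Real.exp (b * t) * Real.exp (-(b * s)) := by
      intro s
      rw [hh, mul_assoc, ← Real.exp_add, show b * t + -(b * s) = -(b * (s - t)) by ring]
    simp_rw [e]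
    rw [MeasureTheory.integral_const_mul, exp_neg_mul_integral_Ioi hbpos]
    rw [div_eq_mul_inv, div_eq_mul_inv, mul_assoc, ← mul_assoc (Real.exp (b * t)),
      ← Real.exp_add, show b * t + -(b * t) = 0 by ring, Real.exp_zero, one_mul]
  calc Real.exp (-η * t - ∫ s in (0:ℝ)..t, ζ s) * (∫ s in Ici t, g s)
      ≤ Real.exp (-η * t - ∫ s in (0:ℝ)..t, ζ s) * (C / b) := by
        rw [← hIh]
        exact mul_le_mul_of_nonneg_left hIle (Real.exp_pos _).le
    _ = K * L / (α - η) * M := by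
        rw [hC, hb]
        have e1 : Real.exp (-η * t - ∫ s in (0:ℝ)..t, ζ s)
            * Real.exp (η * t + ∫ s in (0:ℝ)..t, ζ s) = 1 := by
          rw [← Real.exp_add,
            show (-η * t - ∫ s in (0:ℝ)..t, ζ s) + (η * t + ∫ s in (0:ℝ)..t, ζ s) = 0 by ring,
            Real.exp_zero]
        have hne : α - η ≠ 0 := sub_ne_zero.mpr hη.ne'
        linear_combination (K * L * M / (α - η)) * e1
end
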